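/- arXiv:1008.3444 — 6 statements merged into one kernel-verified Lean document; each statement's English description precedes it below -/
import Mathlib

section
/- For n ≥ 2 and variables x₁, …, x_{n-1} (with the convention that any subscript equal to n or n+1 denotes 1, i.e. x_n = x_{n+1} = 1), for any a with 2 ≤ a ≤ n-1 and h with 1 ≤ h ≤ n-a, let S(n-a) = Σ_{k=0}^{n-a} 1/(x_{n-a-k+1} x_{n-a-k+2}) and S(n-a-h) = Σ_{k=0}^{n-a-h} 1/(x_{n-a-h-k+1} x_{n-a-h-k+2}); then the following identity holds in the field ℚ(x₁,…,x_{n-1}): [x₁ x_{n-a+2}² (1/x₁² + S(n-a)²)] · [x₁ x_{n-a-h+2}² (1/x₁² + S(n-a-h)²)] = [Σ_{k=0}^{h-1} x_{n-a-h+2} x_{n-a+2}/(x_{n-a-k+1} x_{n-a-k+2})]² + [x₁ x_{n-a-h+2} x_{n-a+2} (1/x₁² + S(n-a-h)·S(n-a))]². -/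
open Finset

/-- The field ℚ(x₁, …, x_{n-1}) (realized inside rational functions in countably
many variables). -/
abbrev RF : Type := FractionRing (MvPolynomial ℕ ℚ)

/-- The variables x₁, …, x_{n-1}, with the convention that any other subscript
(in particular a subscript equal to n or n+1) denotes 1. -/
noncomputable def x (n m : ℕ) : RF :=
  if 1 ≤ m ∧ m ≤ n - 1 then algebraMap (MvPolynomial ℕ ℚ) RF (MvPolynomial.X m) else 1

/-- S(m) = Σ_{k=0}^{m} 1/(x_{m-k+1} x_{m-k+2}). -/
noncomputable def S (n m : ℕ) : RF :=
  ∑ k ∈ range (m + 1), 1 / (x n (m - k + 1) * x n (m - k + 2))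

/-- The exchange relation X_{(a,n-1)} · X_{(a+h,n-1)} = X_{(a,h-1)}² + X_{(a+h,n-h-1)}²
(Theorem 4.3, case dim Ext¹ = 2 with 2 ≤ a ≤ n-1). -/
theorem exchange_dimExtTwo (n a h : ℕ) (hn : 2 ≤ n) (ha : 2 ≤ a) (ha' : a ≤ n - 1)
    (hh : 1 ≤ h) (hh' : h ≤ n - a) :
    (x n 1 * x n (n - a + 2) ^ 2 * (1 / x n 1 ^ 2 + S n (n - a) ^ 2)) *
      (x n 1 * x n (n - a - h + 2) ^ 2 * (1 / x n 1 ^ 2 + S n (n - a - h) ^ 2)) =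
    (∑ k ∈ range h,
        x n (n - a - h + 2) * x n (n - a + 2) / (x n (n - a - k + 1) * x n (n - a - k + 2))) ^ 2 +
    (x n 1 * x n (n - a - h + 2) * x n (n - a + 2) *
        (1 / x n 1 ^ 2 + S n (n - a - h) * S n (n - a))) ^ 2 := by
  have hx1 : x n 1 ≠ 0 := by
    unfold x
    rw [if_pos ⟨le_refl 1, by omega⟩]
    exact (map_ne_zero_iff _ (IsFractionRing.injective (MvPolynomial ℕ ℚ) RF)).mpr
      (MvPolynomial.X_ne_zero 1)
  -- split S (n-a) as the partial sum plus S (n-a-h)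
  have hsplit : S n (n - a) =
      (∑ k ∈ range h, 1 / (x n (n - a - k + 1) * x n (n - a - k + 2))) + S n (n - a - h) := by
    unfold S
    have hrange : n - a + 1 = h + (n - a - h + 1) := by omega
    rw [hrange, Finset.sum_range_add]
    congr 1
    refine Finset.sum_congr rfl fun i _ => ?_
    have e : n - a - (h + i) = n - a - h - i := by omega
    rw [e]
  -- pull the constants out of the sum on the RHS
  have hsum : (∑ k ∈ range h,
      x n (n - a - h + 2) * x n (n - a + 2) / (x n (n - a - k + 1) * x n (n - a - k + 2))) =
      x n (n - a - h + 2) * x n (n - a + 2) * (S n (n - a) - S n (n - a - h)) := by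
    rw [hsplit, add_sub_cancel_right, Finset.mul_sum]
    exact Finset.sum_congr rfl fun i _ => by rw [mul_one_div]
  rw [hsum, hsplit]
  set u := x n 1
  set v := x n (n - a + 2)
  set w := x n (n - a - h + 2)
  set A := ∑ k ∈ range h, 1 / (x n (n - a - k + 1) * x n (n - a - k + 2))
  set B := S n (n - a - h)
  field_simp
  ring
end

section
/- For n ≥ 2 and integers a, b, h, i with a = 1, b ≤ n-2, 1 ≤ h ≤ b, 1 ≤ i ≤ n-b-1, the following identity of rational functions holds (with convention x_m = 1 when m ≥ n): x_{n-b} · [Σ_{k=0}^{b-h+i} x_{n-b-i} x_{n-h+1}/(x_{n-1-h-k+1} x_{n-1-h-k+2})] = x_{n-b-i} · [Σ_{k=0}^{b-h} x_{n-b} x_{n-h+1}/(x_{n-1-h-k+1} x_{n-1-h-k+2})] + [Σ_{k=0}^{i-1} x_{n-b-i} x_{n-b}/(x_{n-1-(b+1)-k+1} x_{n-1-(b+1)-k+2})] · x_{n-h+1}. -/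
open Finset

/-- The exchange relation X_{(a,b)} X_{(a+h,b-h+i)} = X_{(a,b+i)} X_{(a+h,b-h)} +
X_{(a+b+1,i-1)} X_{(a,h-1)} from Theorem 4.3, case (a,b) ∈ O (a = 1). -/
theorem exchange_regionO (n b h i : ℕ) (hn : 2 ≤ n) (hb : 1 ≤ b) (hb' : b ≤ n - 2)
    (hh : 1 ≤ h) (hh' : h ≤ b) (hi : 1 ≤ i) (hi' : i ≤ n - b - 1) :
    x n (n - b) *
      (∑ k ∈ range (b - h + i + 1),
        x n (n - b - i) * x n (n - h + 1) /
          (x n (n - 1 - h - k + 1) * x n (n - 1 - h - k + 2))) =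
    x n (n - b - i) *
      (∑ k ∈ range (b - h + 1),
        x n (n - b) * x n (n - h + 1) /
          (x n (n - 1 - h - k + 1) * x n (n - 1 - h - k + 2))) +
    (∑ k ∈ range i,
        x n (n - b - i) * x n (n - b) /
          (x n (n - 1 - (b + 1) - k + 1) * x n (n - 1 - (b + 1) - k + 2))) *
      x n (n - h + 1) := by
  have e1 : b - h + i + 1 = (b - h + 1) + i := by omega
  rw [e1, Finset.sum_range_add, mul_add]
  congr 1
  · rw [Finset.mul_sum, Finset.mul_sum]
    exact Finset.sum_congr rfl fun k _ => by ring
  · rw [Finset.mul_sum, Finset.sum_mul]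
    refine Finset.sum_congr rfl fun k hk => ?_
    have hk' : k < i := Finset.mem_range.mp hk
    have h1 : n - 1 - h - (b - h + 1 + k) + 1 = n - 1 - (b + 1) - k + 1 := by omega
    have h2 : n - 1 - h - (b - h + 1 + k) + 2 = n - 1 - (b + 1) - k + 2 := by omega
    rw [h1, h2]; ring
end

section
/- For n ≥ 2 and variables x₁,…,x_{n-1} (convention x_n = x_{n+1} = 1), for every indecomposable rigid object (a,b) with 2 ≤ a ≤ n-1 and a+b ≤ n, the rational function X_{(a,b)} = Σ_{k=0}^{b} x_{n-a-b+1} x_{n-a+2}/(x_{n-a-k+1} x_{n-a-k+2}) is a Laurent polynomial in x₁,…,x_{n-1} with positive integer coefficients. -/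
open Finset

lemma x_ne_zero (n m : ℕ) : x n m ≠ 0 := by
  unfold x
  split
  · exact (map_ne_zero_iff _ (IsFractionRing.injective (MvPolynomial ℕ ℚ) RF)).2
      (MvPolynomial.X_ne_zero m)
  · exact one_ne_zero

lemma prod_single (n t : ℕ) (ht : t ≤ n) (c : ℤ) :
    ∏ j ∈ range n, x n j ^ (if j = t then c else 0) = x n t ^ c := by
  rcases eq_or_lt_of_le ht with h | h
  · have h1 : x n t = 1 := by
      unfold x
      rw [if_neg (by omega)]
    rw [h1, one_zpow]
    apply Finset.prod_eq_one
    intro j hj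
    rw [if_neg (by have := mem_range.mp hj; omega), zpow_zero]
  · rw [Finset.prod_eq_single t]
    · rw [if_pos rfl]
    · intro j _ hjt; rw [if_neg hjt, zpow_zero]
    · intro h2; exact absurd (mem_range.mpr h) h2

lemma key (n p q r s : ℕ) (hp : p ≤ n) (hq : q ≤ n) (hr : r ≤ n) (hs : s ≤ n) :
    ∏ j ∈ range n, x n j ^
        ((if j = p then (1:ℤ) else 0) + (if j = q then 1 else 0)
          - (if j = r then 1 else 0) - (if j = s then 1 else 0)) =
      x n p * x n q / (x n r * x n s) := by
  have he : ∀ j : ℕ, (if j = p then (1:ℤ) else 0) + (if j = q then 1 else 0)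
      - (if j = r then 1 else 0) - (if j = s then 1 else 0)
      = ((if j = p then (1:ℤ) else 0) + (if j = q then 1 else 0))
        - ((if j = r then 1 else 0) + (if j = s then 1 else 0)) := by
    intro j; ring
  simp_rw [he, zpow_sub₀ (x_ne_zero n _), zpow_add₀ (x_ne_zero n _),
    Finset.prod_div_distrib, Finset.prod_mul_distrib,
    prod_single n p hp, prod_single n q hq, prod_single n r hr, prod_single n s hs, zpow_one]

/-- For (a,b) in region I, X_{(a,b)} is a Laurent polynomial in x₁, …, x_{n-1} with
positive integer coefficients: it is a finite sum of Laurent monomials in the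
variables x₁, …, x_{n-1} with positive integer coefficients. -/
theorem regionI_laurent_positive (n a b : ℕ) (hn : 2 ≤ n) (ha : 2 ≤ a) (ha' : a ≤ n - 1)
    (hb : 1 ≤ b) (hab : a + b ≤ n) :
    ∃ (m : ℕ) (c : Fin m → ℕ) (e : Fin m → ℕ → ℤ),
      (∀ i, 0 < c i) ∧
      (∀ i j, e i j ≠ 0 → 1 ≤ j ∧ j ≤ n - 1) ∧
      (∑ k ∈ range (b + 1),
          x n (n - a - b + 1) * x n (n - a + 2) /
            (x n (n - a - k + 1) * x n (n - a - k + 2))) =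
        ∑ i, (c i : RF) * ∏ j ∈ range n, x n j ^ e i j := by
  refine ⟨b + 1, fun _ => 1, fun i j =>
    if 1 ≤ j ∧ j ≤ n - 1 then
      (if j = n - a - b + 1 then (1:ℤ) else 0) + (if j = n - a + 2 then 1 else 0)
        - (if j = n - a - (i : ℕ) + 1 then 1 else 0)
        - (if j = n - a - (i : ℕ) + 2 then 1 else 0)
    else 0, fun _ => one_pos, ?_, ?_⟩
  · intro i j h
    by_contra hv
    simp only [if_neg hv] at h
    exact h rfl
  · rw [Fin.sum_univ_eq_sum_range (fun k =>
      ((1 : ℕ) : RF) * ∏ j ∈ range n, x n j ^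
        (if 1 ≤ j ∧ j ≤ n - 1 then
          (if j = n - a - b + 1 then (1:ℤ) else 0) + (if j = n - a + 2 then 1 else 0)
            - (if j = n - a - k + 1 then 1 else 0)
            - (if j = n - a - k + 2 then 1 else 0)
        else 0))]
    refine Finset.sum_congr rfl fun k hk => ?_
    have hk' : k ≤ b := by have := mem_range.mp hk; omega
    have hprod : (∏ j ∈ range n, x n j ^
        (if 1 ≤ j ∧ j ≤ n - 1 then
          (if j = n - a - b + 1 then (1:ℤ) else 0) + (if j = n - a + 2 then 1 else 0)
            - (if j = n - a - k + 1 then 1 else 0)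
            - (if j = n - a - k + 2 then 1 else 0)
        else 0)) =
        ∏ j ∈ range n, x n j ^
        ((if j = n - a - b + 1 then (1:ℤ) else 0) + (if j = n - a + 2 then 1 else 0)
            - (if j = n - a - k + 1 then 1 else 0)
            - (if j = n - a - k + 2 then 1 else 0)) := by
      refine Finset.prod_congr rfl fun j _ => ?_
      by_cases hv : 1 ≤ j ∧ j ≤ n - 1
      · rw [if_pos hv]
      · have h1 : x n j = 1 := by unfold x; rw [if_neg hv]
        rw [if_neg hv, h1, one_zpow, one_zpow]
    rw [hprod, key n _ _ _ _ (by omega) (by omega) (by omega) (by omega),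
      Nat.cast_one, one_mul]
end

section
/- For n ≥ 2 and variables x₁,…,x_{n-1} (convention: any x_m with m ≥ n equals 1), for every (a,b) with a+b ≥ n+1, 2 ≤ a ≤ n, b ≤ n-1, the rational function X_{(a,b)} = x₁ x_{n-a+2} x_{2n-a-b+1} [1/x₁² + (Σ_{k=0}^{n-a} 1/(x_{n-a-k+1}x_{n-a-k+2}))·(Σ_{l=0}^{2n-a-b-1} 1/(x_{2n-a-b-l}x_{2n-a-b-l+1}))] is a Laurent polynomial in x₁,…,x_{n-1} with nonnegative integer coefficients. -/
open Finset

/-- "Is a Laurent polynomial in x₁,…,x_{n-1} with nonnegative coefficients". -/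
def IsLP (n : ℕ) (y : RF) : Prop :=
  ∃ (m : ℕ) (c : Fin m → ℕ) (e : Fin m → ℕ → ℤ),
    (∀ i j, e i j ≠ 0 → 1 ≤ j ∧ j ≤ n - 1) ∧
    y = ∑ i, (c i : RF) * ∏ j ∈ range n, x n j ^ e i j

lemma IsLP.add {n : ℕ} {y z : RF} (hy : IsLP n y) (hz : IsLP n z) : IsLP n (y + z) := by
  obtain ⟨m1, c1, e1, h1, rfl⟩ := hy
  obtain ⟨m2, c2, e2, h2, rfl⟩ := hz
  refine ⟨m1 + m2, Fin.addCases c1 c2, Fin.addCases e1 e2, ?_, ?_⟩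
  · intro i
    induction i using Fin.addCases with
    | left i => simpa using h1 i
    | right i => simpa using h2 i
  · rw [Fin.sum_univ_add]
    simp

lemma IsLP.mul {n : ℕ} {y z : RF} (hy : IsLP n y) (hz : IsLP n z) : IsLP n (y * z) := by
  obtain ⟨m1, c1, e1, h1, rfl⟩ := hy
  obtain ⟨m2, c2, e2, h2, rfl⟩ := hz
  refine ⟨m1 * m2,
    fun i => c1 (finProdFinEquiv.symm i).1 * c2 (finProdFinEquiv.symm i).2,
    fun i j => e1 (finProdFinEquiv.symm i).1 j + e2 (finProdFinEquiv.symm i).2 j, ?_, ?_⟩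
  · intro i j h
    by_cases h1' : e1 (finProdFinEquiv.symm i).1 j = 0
    · refine h2 (finProdFinEquiv.symm i).2 j fun h0 => h ?_
      show e1 (finProdFinEquiv.symm i).1 j + e2 (finProdFinEquiv.symm i).2 j = 0
      rw [h1', h0, add_zero]
    · exact h1 _ j h1'
  · have key : ∀ (p : Fin m1 × Fin m2),
        ((c1 p.1 : RF) * ∏ j ∈ range n, x n j ^ e1 p.1 j) *
          ((c2 p.2 : RF) * ∏ j ∈ range n, x n j ^ e2 p.2 j)
        = ((c1 p.1 * c2 p.2 : ℕ) : RF) *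
            ∏ j ∈ range n, x n j ^ (e1 p.1 j + e2 p.2 j) := by
      intro p
      push_cast
      rw [mul_mul_mul_comm, ← Finset.prod_mul_distrib]
      congr 1
      refine Finset.prod_congr rfl fun j _ => ?_
      rw [zpow_add₀ (x_ne_zero n j)]
    rw [Finset.sum_mul_sum]
    rw [← Equiv.sum_comp finProdFinEquiv
      (fun i => ((c1 (finProdFinEquiv.symm i).1 * c2 (finProdFinEquiv.symm i).2 : ℕ) : RF) *
        ∏ j ∈ range n, x n j ^ (e1 (finProdFinEquiv.symm i).1 j + e2 (finProdFinEquiv.symm i).2 j))]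
    simp only [Equiv.symm_apply_apply]
    rw [Fintype.sum_prod_type]
    exact Finset.sum_congr rfl fun a _ => Finset.sum_congr rfl fun b _ => key (a, b)

lemma isLP_zpow (n m : ℕ) (t : ℤ) : IsLP n (x n m ^ t) := by
  by_cases hm : 1 ≤ m ∧ m ≤ n - 1
  · refine ⟨1, fun _ => 1, fun _ j => if j = m then t else 0, ?_, ?_⟩
    · intro i j h
      by_cases hj : j = m
      · subst hj; exact hm
      · simp [hj] at h
    · have hmn : m ∈ range n := by
        have : 1 ≤ n - 1 := le_trans hm.1 hm.2
        exact mem_range.mpr (lt_of_le_of_lt hm.2 (by omega))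
      rw [Fin.sum_univ_one]
      rw [Finset.prod_eq_single m (fun j _ hj => by simp [hj]) (fun h => absurd hmn h)]
      simp
  · have hx : x n m = 1 := by unfold x; rw [if_neg hm]
    exact ⟨1, fun _ => 1, fun _ _ => 0, by simp, by simp [hx]⟩

lemma isLP_x (n m : ℕ) : IsLP n (x n m) := by
  simpa using isLP_zpow n m 1

lemma isLP_x_inv (n m : ℕ) : IsLP n (x n m)⁻¹ := by
  simpa using isLP_zpow n m (-1)

lemma isLP_one_div_mul (n m m' : ℕ) : IsLP n (1 / (x n m * x n m')) := by
  rw [one_div, mul_inv]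
  exact (isLP_x_inv n m).mul (isLP_x_inv n m')

lemma isLP_sum {n : ℕ} {s : Finset ℕ} {f : ℕ → RF} (h : ∀ k ∈ s, IsLP n (f k)) :
    IsLP n (∑ k ∈ s, f k) := by
  refine Finset.sum_induction f (IsLP n) (fun a b ha hb => ha.add hb) ?_ h
  exact ⟨0, Fin.elim0, Fin.elim0, fun i => i.elim0, by simp⟩

/-- For (a,b) in region II, X_{(a,b)} is a Laurent polynomial in x₁, …, x_{n-1} with
nonnegative integer coefficients. -/
theorem regionII_laurent_nonneg (n a b : ℕ) (hn : 2 ≤ n) (ha : 2 ≤ a) (ha' : a ≤ n)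
    (hb : b ≤ n - 1) (hab : n + 1 ≤ a + b) :
    ∃ (m : ℕ) (c : Fin m → ℕ) (e : Fin m → ℕ → ℤ),
      (∀ i j, e i j ≠ 0 → 1 ≤ j ∧ j ≤ n - 1) ∧
      (x n 1 * x n (n - a + 2) * x n (2 * n - a - b + 1) *
          (1 / x n 1 ^ 2 +
            (∑ k ∈ range (n - a + 1), 1 / (x n (n - a - k + 1) * x n (n - a - k + 2))) *
            (∑ l ∈ range (2 * n - a - b),
              1 / (x n (2 * n - a - b - l) * x n (2 * n - a - b - l + 1))))) =
        ∑ i, (c i : RF) * ∏ j ∈ range n, x n j ^ e i j := by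
  have hsq : (1 : RF) / x n 1 ^ 2 = x n 1 ^ (-2 : ℤ) := by
    rw [zpow_neg, one_div]
    norm_cast
  have H : IsLP n (x n 1 * x n (n - a + 2) * x n (2 * n - a - b + 1) *
      (1 / x n 1 ^ 2 +
        (∑ k ∈ range (n - a + 1), 1 / (x n (n - a - k + 1) * x n (n - a - k + 2))) *
        (∑ l ∈ range (2 * n - a - b),
          1 / (x n (2 * n - a - b - l) * x n (2 * n - a - b - l + 1))))) := by
    refine (((isLP_x n 1).mul (isLP_x n _)).mul (isLP_x n _)).mul (IsLP.add ?_ (IsLP.mul ?_ ?_))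
    · rw [hsq]; exact isLP_zpow n 1 (-2)
    · exact isLP_sum fun k _ => isLP_one_div_mul n _ _
    · exact isLP_sum fun l _ => isLP_one_div_mul n _ _
  exact H
end

section
/- For n ≥ 3, in ℚ(x₁,…,x_{n-1}) with convention x_n = x_{n+1} = 1: for a+b = n, 2 ≤ a ≤ n-1, 1 ≤ h ≤ b, 1 ≤ i ≤ n-b-1, the identity [Σ_{k=0}^{b} x₁x_{n-a+2}/(x_{n-a-k+1}x_{n-a-k+2})] · X_{(a+h,b-h+i)} = X_{(a,b+i)} · [Σ_{k=0}^{b-h} x₁ x_{n-a-h+2}/(x_{n-a-h-k+1}x_{n-a-h-k+2})] + x_{n-i+1} · [Σ_{k=0}^{h-1} x_{n-a-h+2}x_{n-a+2}/(x_{n-a-k+1}x_{n-a-k+2})] holds, where X_{(a,b+i)} = x₁ x_{n-a+2} x_{n-i+1}[1/x₁² + (Σ_{k=0}^{n-a} 1/(x_{n-a-k+1}x_{n-a-k+2}))(Σ_{l=0}^{n-i-1} 1/(x_{n-i-l}x_{n-i-l+1}))] and X_{(a+h,b-h+i)} = x₁ x_{n-a-h+2} x_{n-i+1}[1/x₁²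 + (Σ_{k=0}^{n-a-h} 1/(x_{n-a-h-k+1}x_{n-a-h-k+2}))(Σ_{l=0}^{n-i-1} 1/(x_{n-i-l}x_{n-i-l+1}))]. -/
open Finset

/-- The exchange relation of Theorem 4.3, case (a,b) ∈ I with a+b = n. -/
theorem exchange_regionI_boundary (n a b h i : ℕ) (hn : 3 ≤ n) (ha : 2 ≤ a)
    (ha' : a ≤ n - 1) (hab : a + b = n) (hh : 1 ≤ h) (hh' : h ≤ b)
    (hi : 1 ≤ i) (hi' : i ≤ n - b - 1) :
    (∑ k ∈ range (b + 1),
        x n 1 * x n (n - a + 2) / (x n (n - a - k + 1) * x n (n - a - k + 2))) *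
      (x n 1 * x n (n - a - h + 2) * x n (n - i + 1) *
        (1 / x n 1 ^ 2 +
          (∑ k ∈ range (n - a - h + 1),
            1 / (x n (n - a - h - k + 1) * x n (n - a - h - k + 2))) *
          (∑ l ∈ range (n - i), 1 / (x n (n - i - l) * x n (n - i - l + 1))))) =
    (x n 1 * x n (n - a + 2) * x n (n - i + 1) *
        (1 / x n 1 ^ 2 +
          (∑ k ∈ range (n - a + 1), 1 / (x n (n - a - k + 1) * x n (n - a - k + 2))) *
          (∑ l ∈ range (n - i), 1 / (x n (n - i - l) * x n (n - i - l + 1))))) *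
      (∑ k ∈ range (b - h + 1),
        x n 1 * x n (n - a - h + 2) / (x n (n - a - h - k + 1) * x n (n - a - h - k + 2))) +
    x n (n - i + 1) *
      (∑ k ∈ range h,
        x n (n - a - h + 2) * x n (n - a + 2) / (x n (n - a - k + 1) * x n (n - a - k + 2))) := by
  have hb : n - a = b := by omega
  have hu : x n 1 ≠ 0 := by
    unfold x
    rw [if_pos ⟨le_refl 1, by omega⟩]
    exact (map_ne_zero_iff _ (IsFractionRing.injective _ _)).mpr (MvPolynomial.X_ne_zero 1)
  rw [hb]
  set S := ∑ l ∈ range (n - i), 1 / (x n (n - i - l) * x n (n - i - l + 1)) with hS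
  set u := x n 1 with hxu
  set v := x n (b + 2) with hxv
  set w := x n (b - h + 2) with hxw
  set y := x n (n - i + 1) with hxy
  set A := ∑ k ∈ range (b + 1), 1 / (x n (b - k + 1) * x n (b - k + 2)) with hAdef
  set B := ∑ k ∈ range (b - h + 1), 1 / (x n (b - h - k + 1) * x n (b - h - k + 2)) with hBdef
  set C := ∑ k ∈ range h, 1 / (x n (b - k + 1) * x n (b - k + 2)) with hCdef
  have e1 : (∑ k ∈ range (b + 1), u * v / (x n (b - k + 1) * x n (b - k + 2))) = u * v * A := by
    rw [hAdef, Finset.mul_sum]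
    exact Finset.sum_congr rfl fun k _ => by rw [mul_one_div]
  have e2 : (∑ k ∈ range (b - h + 1),
      u * w / (x n (b - h - k + 1) * x n (b - h - k + 2))) = u * w * B := by
    rw [hBdef, Finset.mul_sum]
    exact Finset.sum_congr rfl fun k _ => by rw [mul_one_div]
  have e3 : (∑ k ∈ range h, w * v / (x n (b - k + 1) * x n (b - k + 2))) = w * v * C := by
    rw [hCdef, Finset.mul_sum]
    exact Finset.sum_congr rfl fun k _ => by rw [mul_one_div]
  rw [e1, e2, e3]
  have hA : A = C + B := by
    rw [hAdef, hCdef, hBdef, show b + 1 = h + (b - h + 1) by omega, Finset.sum_range_add]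
    congr 1
    exact Finset.sum_congr rfl fun k _ => by rw [Nat.sub_sub]
  rw [hA]
  field_simp
  ring
end

section
/- For the matrix A = [[0,1],[-2,0]], repeated mutation gives a period: μ₁(A) = [[0,-1],[2,0]], μ₂μ₁(A) = [[0,1],[-2,0]] = A; more generally, for the seed pattern of type C₂ starting from ({x₁,x₂}, A), alternately mutating in directions 1 and 2 returns to the initial seed after exactly 6 mutations (i.e., the exchange graph is a cycle of length 6). -/
open Finset

/-- The field ℚ(x₁, x₂). -/
abbrev K2 : Type := FractionRing (MvPolynomial (Fin 2) ℚ)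

noncomputable def x1 : K2 := algebraMap (MvPolynomial (Fin 2) ℚ) K2 (MvPolynomial.X 0)
noncomputable def x2 : K2 := algebraMap (MvPolynomial (Fin 2) ℚ) K2 (MvPolynomial.X 1)

/-- Fomin–Zelevinsky matrix mutation in direction `k`. -/
def mutate (A : Matrix (Fin 2) (Fin 2) ℤ) (k : Fin 2) : Matrix (Fin 2) (Fin 2) ℤ :=
  fun i j => if i = k ∨ j = k then -A i j
    else A i j + (abs (A i k) * A k j + A i k * abs (A k j)) / 2

/-- A seed: a pair consisting of a cluster (labelled by Fin 2) and an exchange matrix. -/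
abbrev Seed : Type := (Fin 2 → K2) × Matrix (Fin 2) (Fin 2) ℤ

/-- Seed mutation in direction k. -/
noncomputable def mutateSeed (k : Fin 2) (s : Seed) : Seed :=
  ⟨Function.update s.1 k
      ((∏ i, s.1 i ^ (s.2 i k).toNat + ∏ i, s.1 i ^ (-s.2 i k).toNat) / s.1 k),
    mutate s.2 k⟩

/-- The initial seed ({x₁,x₂}, A₀) with A₀ = [[0,1],[-2,0]] of type C₂. -/
noncomputable def s0 : Seed := ⟨![x1, x2], !![0, 1; -2, 0]⟩

/-- The sequence of seeds obtained by alternately mutating in directions 1 and 2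
(0-indexed: directions 0 and 1), starting with direction 1. -/
noncomputable def altSeq : ℕ → Seed
  | 0 => s0
  | m + 1 => mutateSeed (if m % 2 = 0 then 0 else 1) (altSeq m)

/-- Equality of seeds up to simultaneous relabeling. -/
def eqUpToRelabel (s t : Seed) : Prop :=
  ∃ σ : Equiv.Perm (Fin 2), (∀ i, s.1 i = t.1 (σ i)) ∧ ∀ i j, s.2 i j = t.2 (σ i) (σ j)

/-! ### Auxiliary lemmas -/

open MvPolynomial in
lemma am_ne (p q : MvPolynomial (Fin 2) ℚ)
    (h : MvPolynomial.eval (fun _ => (0:ℚ)) p ≠ MvPolynomial.eval (fun _ => (0:ℚ)) q) :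
    algebraMap (MvPolynomial (Fin 2) ℚ) K2 p ≠ algebraMap (MvPolynomial (Fin 2) ℚ) K2 q := by
  intro he
  exact h (by rw [IsFractionRing.injective (MvPolynomial (Fin 2) ℚ) K2 he])

lemma hx1 : x1 ≠ 0 := by
  rw [x1, map_ne_zero_iff _ (IsFractionRing.injective (MvPolynomial (Fin 2) ℚ) K2)]
  exact MvPolynomial.X_ne_zero 0

lemma hx2 : x2 ≠ 0 := by
  rw [x2, map_ne_zero_iff _ (IsFractionRing.injective (MvPolynomial (Fin 2) ℚ) K2)]
  exact MvPolynomial.X_ne_zero 1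

open MvPolynomial in
lemma na : (1 : K2) + x2 ^ 2 ≠ 0 := by
  have := am_ne (1 + X 1 ^ 2) 0 (by simp)
  simpa [x2] using this

open MvPolynomial in
lemma nb : x1 + 1 + x2 ^ 2 ≠ 0 := by
  have := am_ne (X 0 + 1 + X 1 ^ 2) 0 (by simp)
  simpa [x1, x2] using this

open MvPolynomial in
lemma nc : (x1 + 1) ^ 2 + x2 ^ 2 ≠ 0 := by
  have := am_ne ((X 0 + 1) ^ 2 + X 1 ^ 2) 0 (by simp)
  simpa [x1, x2] using this

open MvPolynomial in
lemma nd : x1 + 1 ≠ 0 := by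
  have := am_ne (X 0 + 1) 0 (by simp)
  simpa [x1] using this

/-- The third cluster variable. -/
noncomputable def va : K2 := (1 + x2 ^ 2) / x1
/-- The fourth cluster variable. -/
noncomputable def vb : K2 := (x1 + 1 + x2 ^ 2) / (x1 * x2)
/-- The fifth cluster variable. -/
noncomputable def vc : K2 := ((x1 + 1) ^ 2 + x2 ^ 2) / (x1 * x2 ^ 2)
/-- The sixth cluster variable. -/
noncomputable def vd : K2 := (x1 + 1) / x2

lemma idb : (1 + va) / x2 = vb := by
  rw [va, vb]; field_simp [hx1, hx2]; ring
lemma idc : (1 + vb ^ 2) / va = vc := by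
  rw [va, vb, vc]; field_simp [hx1, hx2, na]; ring
lemma idd : (1 + vc) / vb = vd := by
  rw [vb, vc, vd]; field_simp [hx1, hx2, nb]; ring
lemma ide : (1 + vd ^ 2) / vc = x1 := by
  rw [vc, vd]; field_simp [hx1, hx2, nc]; ring
lemma idf : (1 + x1) / vd = x2 := by
  rw [vd]; field_simp [hx2, nd]; ring

open MvPolynomial in
lemma va_ne_x1 : va ≠ x1 := by
  rw [va, Ne, div_eq_iff hx1]
  have := am_ne (1 + X 1 ^ 2) (X 0 * X 0) (by simp)
  simpa [x1, x2] using this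

open MvPolynomial in
lemma va_ne_x2 : va ≠ x2 := by
  rw [va, Ne, div_eq_iff hx1]
  have := am_ne (1 + X 1 ^ 2) (X 1 * X 0) (by simp)
  simpa [x1, x2] using this

open MvPolynomial in
lemma vc_ne_x1 : vc ≠ x1 := by
  rw [vc, Ne, div_eq_iff (mul_ne_zero hx1 (pow_ne_zero 2 hx2))]
  have := am_ne ((X 0 + 1) ^ 2 + X 1 ^ 2) (X 0 * (X 0 * X 1 ^ 2)) (by simp)
  simpa [x1, x2] using this

open MvPolynomial in
lemma vc_ne_x2 : vc ≠ x2 := by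
  rw [vc, Ne, div_eq_iff (mul_ne_zero hx1 (pow_ne_zero 2 hx2))]
  have := am_ne ((X 0 + 1) ^ 2 + X 1 ^ 2) (X 1 * (X 0 * X 1 ^ 2)) (by simp)
  simpa [x1, x2] using this

lemma step0 (u v : K2) : mutateSeed 0 (![u, v], !![0, 1; -2, 0]) =
    (![(1 + v ^ 2) / u, v], !![0, -1; 2, 0]) := by
  unfold mutateSeed
  refine Prod.ext ?_ (show mutate !![0, 1; -2, 0] 0 = !![0, -1; 2, 0] by decide)
  funext i
  fin_cases i <;>
    simp [Function.update, Fin.prod_univ_two, Matrix.cons_val_zero, Matrix.cons_val_one]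

lemma step1 (u v : K2) : mutateSeed 1 (![u, v], !![0, -1; 2, 0]) =
    (![u, (1 + u) / v], !![0, 1; -2, 0]) := by
  unfold mutateSeed
  refine Prod.ext ?_ (show mutate !![0, -1; 2, 0] 1 = !![0, 1; -2, 0] by decide)
  funext i
  fin_cases i <;>
    simp [Function.update, Fin.prod_univ_two, Matrix.cons_val_zero, Matrix.cons_val_one]

lemma e1 : altSeq 1 = (![va, x2], !![0, -1; 2, 0]) := by
  show mutateSeed 0 (![x1, x2], !![0, 1; -2, 0]) = _
  rw [step0]; rfl

lemma e2 : altSeq 2 = (![va, vb], !![0, 1; -2, 0]) := by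
  show mutateSeed 1 (altSeq 1) = _
  rw [e1, step1, idb]

lemma e3 : altSeq 3 = (![vc, vb], !![0, -1; 2, 0]) := by
  show mutateSeed 0 (altSeq 2) = _
  rw [e2, step0, idc]

lemma e4 : altSeq 4 = (![vc, vd], !![0, 1; -2, 0]) := by
  show mutateSeed 1 (altSeq 3) = _
  rw [e3, step1, idd]

lemma e5 : altSeq 5 = (![x1, vd], !![0, -1; 2, 0]) := by
  show mutateSeed 0 (altSeq 4) = _
  rw [e4, step0, ide]

lemma e6 : altSeq 6 = s0 := by
  show mutateSeed 1 (altSeq 5) = _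
  rw [e5, step1, idf]; rfl

lemma fin2cases : ∀ j : Fin 2, j = 0 ∨ j = 1 := by decide

/-- μ₁(A₀) = [[0,-1],[2,0]], μ₂μ₁(A₀) = A₀, and alternately mutating the seed
({x₁,x₂}, A₀) in directions 1 and 2 returns to the initial seed after exactly 6
mutations (the exchange graph is a cycle of length 6). -/
theorem typeC2_period_six :
    mutate !![0, 1; -2, 0] 0 = !![0, -1; 2, 0] ∧
    mutate (mutate !![0, 1; -2, 0] 0) 1 = !![0, 1; -2, 0] ∧
    eqUpToRelabel (altSeq 6) s0 ∧
    (∀ m : ℕ, 0 < m → m < 6 → ¬ eqUpToRelabel (altSeq m) s0) := by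
  refine ⟨by decide, by decide, ?_, ?_⟩
  · exact ⟨Equiv.refl _, fun i => by rw [e6]; rfl, fun i j => by rw [e6]; rfl⟩
  · intro m hm0 hm6
    interval_cases m
    · rintro ⟨σ, -, hM⟩
      have h0 := hM 0 1
      rw [e1] at h0
      rcases fin2cases (σ 0) with h | h <;> rcases fin2cases (σ 1) with h' | h' <;>
        rw [h, h'] at h0 <;> simp [s0] at h0
    · rintro ⟨σ, hC, -⟩
      have h0 := hC 0
      rw [e2] at h0
      rcases fin2cases (σ 0) with h | h <;> rw [h] at h0 <;> simp [s0] at h0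
      exacts [va_ne_x1 h0, va_ne_x2 h0]
    · rintro ⟨σ, -, hM⟩
      have h0 := hM 0 1
      rw [e3] at h0
      rcases fin2cases (σ 0) with h | h <;> rcases fin2cases (σ 1) with h' | h' <;>
        rw [h, h'] at h0 <;> simp [s0] at h0
    · rintro ⟨σ, hC, -⟩
      have h0 := hC 0
      rw [e4] at h0
      rcases fin2cases (σ 0) with h | h <;> rw [h] at h0 <;> simp [s0] at h0
      exacts [vc_ne_x1 h0, vc_ne_x2 h0]
    · rintro ⟨σ, -, hM⟩
      have h0 := hM 0 1
      rw [e5] at h0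
      rcases fin2cases (σ 0) with h | h <;> rcases fin2cases (σ 1) with h' | h' <;>
        rw [h, h'] at h0 <;> simp [s0] at h0
end
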